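/- For every nonnegative integer n and every F-step (a,b), the number of restricted bicolored Dyck paths B of semilength n+1 whose letter sequence ends with u dR^{1−b} dB^{a} u dR^{m+1} for some integer m ≥ 0 equals the number of F-paths of length n whose last step is (a,b). Consequently, the number of restricted bicolored Dyck paths of semilength n+1 equals |F_n|. -/

import Mathlib

/-- An `F`-step: `(0,1)` or `(a,b)` with `a ≥ 1` and `b ≤ 1`. -/
def IsFStep (s : ℤ × ℤ) : Prop := s = (0, 1) ∨ (1 ≤ s.1 ∧ s.2 ≤ 1)

/-- An `F`-path: a sequence of `F`-steps whose prefix sums satisfy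
`a_1 + ⋯ + a_i ≤ b_1 + ⋯ + b_i`. -/
def IsFPath (Q : List (ℤ × ℤ)) : Prop :=
  (∀ s ∈ Q, IsFStep s) ∧
  ∀ i : ℕ, ((Q.take i).map Prod.fst).sum ≤ ((Q.take i).map Prod.snd).sum

/-- The set of `F`-paths of length `n`. -/
def FPaths (n : ℕ) : Set (List (ℤ × ℤ)) := {Q | Q.length = n ∧ IsFPath Q}

def fheight (Q : List (ℤ × ℤ)) : ℤ := (Q.map Prod.snd).sum - (Q.map Prod.fst).sum

def fnorth (Q : List (ℤ × ℤ)) : ℕ := Q.countP (fun s => decide (s = ((0 : ℤ), (1 : ℤ))))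

def faone (Q : List (ℤ × ℤ)) : ℕ := Q.countP (fun s => decide (s.1 = 1))

def fbone (Q : List (ℤ × ℤ)) : ℕ := Q.countP (fun s => decide (s.2 = 1))

/-- Steps of a Schröder path. -/
inductive SStep : Type
  | u | d | h
deriving DecidableEq

/-- The width of a Schröder step. -/
def swidth : SStep → ℕ
  | .u => 1
  | .d => 1
  | .h => 2

/-- The height-change of a Schröder step. -/
def shc : SStep → ℤ
  | .u => 1
  | .d => -1
  | .h => 0

/-- A Schröder path of semilength `n`. -/
def IsSchroder (n : ℕ) (P : List SStep) : Prop :=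
  (P.map swidth).sum = 2 * n ∧ (P.map shc).sum = 0 ∧
  ∀ i : ℕ, 0 ≤ ((P.take i).map shc).sum

/-- Schröder paths of semilength `n` without triple descents. -/
def SchP (n : ℕ) : Set (List SStep) :=
  {P | IsSchroder n P ∧ ¬ [SStep.d, SStep.d, SStep.d] <:+: P}

/-- Number of `h` letters preceded by a prefix of total height-change `0`. -/
noncomputable def scomp (P : List SStep) : ℕ :=
  Set.ncard {i : ℕ | P[i]? = some SStep.h ∧ ((P.take i).map shc).sum = 0}

/-- Number of `h` letters plus number of double descents. -/
noncomputable def shdd (P : List SStep) : ℕ :=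
  P.countP (fun s => decide (s = SStep.h)) +
    Set.ncard {i : ℕ | P[i]? = some SStep.d ∧ P[i + 1]? = some SStep.d}

/-- Number of peaks `ud`. -/
noncomputable def speak (P : List SStep) : ℕ :=
  Set.ncard {i : ℕ | P[i]? = some SStep.u ∧ P[i + 1]? = some SStep.d}

/-- Steps of a bicolored Dyck path: up, red down, black down. -/
inductive BStep : Type
  | u | dR | dB
deriving DecidableEq

/-- A restricted bicolored Dyck path of semilength `n`:
`u^{i_1} dR^{j_1} dB^{k_1} ⋯ u^{i_{ℓ-1}} dR^{j_{ℓ-1}} dB^{k_{ℓ-1}} u^{i_ℓ} dR^{j_ℓ}`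
with positive `i`'s and `k`'s, `∑ i = n`, `∑ j + ∑ k = n`, and every prefix having
at least as many `u`'s as down steps. -/
def IsRBD (n : ℕ) (B : List BStep) : Prop :=
  (∃ (blocks : List (ℕ × ℕ × ℕ)) (iL jL : ℕ),
    (∀ t ∈ blocks, 1 ≤ t.1 ∧ 1 ≤ t.2.2) ∧ 1 ≤ iL ∧
    B = (blocks.map (fun t =>
        List.replicate t.1 BStep.u ++ List.replicate t.2.1 BStep.dR ++
          List.replicate t.2.2 BStep.dB)).flatten ++
        (List.replicate iL BStep.u ++ List.replicate jL BStep.dR) ∧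
    (blocks.map (fun t => t.1)).sum + iL = n ∧
    (blocks.map (fun t => t.2.1)).sum + jL + (blocks.map (fun t => t.2.2)).sum = n) ∧
  ∀ i : ℕ, (B.take i).countP (fun s => decide (s ≠ BStep.u)) ≤
    (B.take i).countP (fun s => decide (s = BStep.u))

/-- The length of the final run of red down steps. -/
def blast (B : List BStep) : ℕ := (B.reverse.takeWhile (fun s => decide (s = BStep.dR))).length

/-- The number of double ascents `uu`. -/
noncomputable def bdasc (B : List BStep) : ℕ :=
  Set.ncard {i : ℕ | B[i]? = some BStep.u ∧ B[i + 1]? = some BStep.u}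

/-- The number of occurrences of `u dB u` or `dR dB u`. -/
noncomputable def bbval (B : List BStep) : ℕ :=
  Set.ncard {i : ℕ | (B[i]? = some BStep.u ∨ B[i]? = some BStep.dR) ∧
    B[i + 1]? = some BStep.dB ∧ B[i + 2]? = some BStep.u}

/-- `π : ℕ → ℕ` encodes a permutation of `{1,…,N}`, with value `0` outside
(in particular `π 0 = 0`). -/
def IsPermOn (N : ℕ) (π : ℕ → ℕ) : Prop :=
  Set.BijOn π (Set.Icc 1 N) (Set.Icc 1 N) ∧ ∀ i, i ∉ Set.Icc 1 N → π i = 0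

/-- `π` contains the pattern given by the word `σ`. -/
def ContainsPat (N : ℕ) (π : ℕ → ℕ) (σ : List ℕ) : Prop :=
  ∃ f : Fin σ.length → ℕ, StrictMono f ∧ (∀ t, f t ∈ Set.Icc 1 N) ∧
    ∀ s t : Fin σ.length, π (f s) < π (f t) ↔ σ.get s < σ.get t

/-- Permutations of `{1,…,N}` avoiding the patterns `2341`, `2431` and `3241`. -/
def PermSet (N : ℕ) : Set (ℕ → ℕ) :=
  {π | IsPermOn N π ∧ ¬ContainsPat N π [2, 3, 4, 1] ∧ ¬ContainsPat N π [2, 4, 3, 1] ∧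
    ¬ContainsPat N π [3, 2, 4, 1]}

/-- `block(π)`: the number of `j ∈ {1,…,N}` with `{π(1),…,π(j)} = {1,…,j}`. -/
noncomputable def blockStat (N : ℕ) (π : ℕ → ℕ) : ℕ :=
  Set.ncard {j : ℕ | 1 ≤ j ∧ j ≤ N ∧ π '' Set.Icc 1 j = Set.Icc 1 j}

/-- `asc(π)`: the number of ascents of `π`. -/
noncomputable def ascStat (N : ℕ) (π : ℕ → ℕ) : ℕ :=
  Set.ncard {i : ℕ | 1 ≤ i ∧ i + 1 ≤ N ∧ π i < π (i + 1)}

/-- `crit(π)`: the number of critical entries of `π`. -/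
noncomputable def critStat (N : ℕ) (π : ℕ → ℕ) : ℕ :=
  Set.ncard {i : ℕ | 1 ≤ i ∧ i ≤ N ∧ ∀ j k : ℕ, 1 ≤ j → j < i → i < k → k ≤ N →
    π j < π i → π k < π i → π j < π k}

/-- An inversion sequence: `0 ≤ e_i < i` (1-indexed). -/
def IsInvSeq (e : List ℕ) : Prop := ∀ i : Fin e.length, e.get i < i.val + 1

/-- `e` contains the pattern `101`. -/
def Contains101 (e : List ℕ) : Prop :=
  ∃ i j k : Fin e.length, i < j ∧ j < k ∧ e.get j < e.get i ∧ e.get i = e.get k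

/-- `e` contains the pattern `102`. -/
def Contains102 (e : List ℕ) : Prop :=
  ∃ i j k : Fin e.length, i < j ∧ j < k ∧ e.get j < e.get i ∧ e.get i < e.get k

/-- `e` contains the pattern `021`. -/
def Contains021 (e : List ℕ) : Prop :=
  ∃ i j k : Fin e.length, i < j ∧ j < k ∧ e.get i < e.get k ∧ e.get k < e.get j

/-- Inversion sequences of length `n` avoiding `101` and `102`. -/
def ISet (n : ℕ) : Set (List ℕ) :=
  {e | e.length = n ∧ IsInvSeq e ∧ ¬Contains101 e ∧ ¬Contains102 e}

/-- Inversion sequences of length `n` avoiding `101` and `021`. -/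
def JSet (n : ℕ) : Set (List ℕ) :=
  {e | e.length = n ∧ IsInvSeq e ∧ ¬Contains101 e ∧ ¬Contains021 e}

/-- The largest entry of `e` (`0` for the empty sequence). -/
def maxVal (e : List ℕ) : ℕ := e.foldr max 0

/-- The largest (1-indexed) position of the maximal entry of `e`. -/
def maxid (e : List ℕ) : ℕ := e.length - e.reverse.idxOf (maxVal e)

/-- `e` with the entry at position `maxid e` removed. -/
def ehat (e : List ℕ) : List ℕ := e.eraseIdx (maxid e - 1)

/-- `omi(e)`: the number of `i ∈ {1,…,n}` not occurring as an entry of `e`. -/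
noncomputable def omi (e : List ℕ) : ℕ := Set.ncard {i : ℕ | 1 ≤ i ∧ i ≤ e.length ∧ i ∉ e}

/-- `cons(e)`: the number of `i ∈ {1,…,n-1}` such that both `i-1` and `i` occur in `e`. -/
noncomputable def consStat (e : List ℕ) : ℕ :=
  Set.ncard {i : ℕ | 1 ≤ i ∧ i + 1 ≤ e.length ∧ (i - 1) ∈ e ∧ i ∈ e}

/-- `first(e)`: the length of the initial run of zeros of `e`. -/
def firstStat (e : List ℕ) : ℕ := (e.takeWhile (fun v => decide (v = 0))).length

/-- `single(e)`: the number of positive integers occurring exactly once in `e`. -/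
noncomputable def singleStat (e : List ℕ) : ℕ := Set.ncard {v : ℕ | 1 ≤ v ∧ e.count v = 1}

/-- The binomial coefficient `C(p,q)`, interpreted as `0` unless `0 ≤ q ≤ p`. -/
def C (p q : ℤ) : ℤ := if 0 ≤ q ∧ q ≤ p then (p.toNat.choose q.toNat : ℤ) else 0


/-!
An `F`-step `(a, b)` is encoded as the block `u dR^{1-b} dB^a` (so `(0, 1)` becomes a lone `u`),
and an `F`-path `Q` of final height `h` as the concatenation of its blocks followed by
`u dR^{h+1}`. A block changes the height by `b - a` and, being an up step followed by down steps,
never goes below the lower of its two end heights; so the ballot condition on `Q` is the prefix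
condition on its code. Attaching every lone `u` to the next block gives the factorisation
`u^i dR^j dB^k ⋯ u^i dR^j` of a restricted bicolored Dyck path, and conversely a factor
`u^i dR^j dB^k` splits back into `i - 1` steps `(0, 1)` followed by the step `(k, 1 - j)`.
As blocks other than `u` end in `dB`, the code can be parsed uniquely, and its tail
`u dR^{1-b} dB^a u dR^{h+1}` records the last step `(a, b)`.
-/

namespace List

variable {α : Type*} {x : α}

theorem replicate_append_inj_of_head?_ne : ∀ {p q : ℕ} {l l' : List α},
    l.head? ≠ some x → l'.head? ≠ some x →
    replicate p x ++ l = replicate q x ++ l' → p = q ∧ l = l'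
  | 0, 0, _, _, _, _, h => ⟨rfl, h⟩
  | 0, _ + 1, _, _, hl, _, h => by
      rw [replicate_zero, nil_append] at h
      simp [h, replicate_succ] at hl
  | _ + 1, 0, _, _, _, hl', h => by
      rw [replicate_zero, nil_append] at h
      simp [← h, replicate_succ] at hl'
  | _ + 1, _ + 1, _, _, hl, hl', h => by
      simp only [replicate_succ, cons_append, cons.injEq, true_and] at h
      obtain ⟨rfl, rfl⟩ := replicate_append_inj_of_head?_ne hl hl' h
      exact ⟨rfl, rfl⟩

theorem replicate_append_prefix_of_head?_ne {p q : ℕ} {l l' : List α} (hne : l ≠ [])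
    (hl : l.head? ≠ some x) (hl' : l'.head? ≠ some x)
    (h : replicate p x ++ l <+: replicate q x ++ l') : p = q ∧ l <+: l' := by
  obtain ⟨t, ht⟩ := h
  rw [append_assoc] at ht
  obtain ⟨hpq, hlt⟩ :=
    replicate_append_inj_of_head?_ne (by rwa [head?_append_of_ne_nil _ hne]) hl' ht
  exact ⟨hpq, t, hlt⟩

end List

namespace IsFStep

variable {s s' : ℤ × ℤ}

theorem fst_nonneg (h : IsFStep s) : 0 ≤ s.1 := by
  rcases h with rfl | h
  · exact le_rfl
  · omega

theorem snd_le_one (h : IsFStep s) : s.2 ≤ 1 := by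
  rcases h with rfl | h
  · exact le_rfl
  · exact h.2

theorem eq_of_toNat_eq (h : IsFStep s) (h' : IsFStep s')
    (hb : (1 - s.2).toNat = (1 - s'.2).toNat) (ha : s.1.toNat = s'.1.toNat) : s = s' := by
  have := h.fst_nonneg; have := h.snd_le_one; have := h'.fst_nonneg; have := h'.snd_le_one
  exact Prod.ext (by omega) (by omega)

end IsFStep

@[simp] theorem fheight_nil : fheight [] = 0 := rfl

theorem fheight_cons (s : ℤ × ℤ) (Q : List (ℤ × ℤ)) :
    fheight (s :: Q) = s.2 - s.1 + fheight Q := by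
  simp only [fheight, List.map_cons, List.sum_cons]; ring

theorem isFPath_iff {Q : List (ℤ × ℤ)} :
    IsFPath Q ↔ (∀ s ∈ Q, IsFStep s) ∧ ∀ i, 0 ≤ fheight (Q.take i) := by
  simp only [IsFPath, fheight, sub_nonneg]

theorem IsFPath.fheight_nonneg {Q : List (ℤ × ℤ)} (hQ : IsFPath Q) : 0 ≤ fheight Q := by
  simpa using (isFPath_iff.1 hQ).2 Q.length

def upCount (L : List BStep) : ℕ := L.countP (fun s => decide (s = BStep.u))

def downCount (L : List BStep) : ℕ := L.countP (fun s => decide (s ≠ BStep.u))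

def bheight (L : List BStep) : ℤ := upCount L - downCount L

def StaysNonnegFrom (c : ℤ) (L : List BStep) : Prop := ∀ i, 0 ≤ c + bheight (L.take i)

section Height

variable {L L₁ L₂ : List BStep}

@[simp] theorem upCount_append : upCount (L₁ ++ L₂) = upCount L₁ + upCount L₂ :=
  List.countP_append

@[simp] theorem downCount_append : downCount (L₁ ++ L₂) = downCount L₁ + downCount L₂ :=
  List.countP_append

@[simp] theorem bheight_nil : bheight [] = 0 := rfl

@[simp] theorem bheight_append : bheight (L₁ ++ L₂) = bheight L₁ + bheight L₂ := by
  simp only [bheight, upCount_append, downCount_append]; push_cast; ring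

@[simp] theorem bheight_u_cons : bheight (BStep.u :: L) = 1 + bheight L := by
  simp [bheight, upCount, downCount]; ring

theorem bheight_of_forall_ne_u (hL : ∀ x ∈ L, x ≠ BStep.u) : bheight L = -L.length := by
  have hu : upCount L = 0 := List.countP_eq_zero.2 (by simpa using hL)
  have hd : downCount L = L.length := List.countP_eq_length.2 (by simpa using hL)
  simp [bheight, hu, hd]

@[simp] theorem bheight_replicate_dR (j : ℕ) : bheight (List.replicate j BStep.dR) = -j := by
  rw [bheight_of_forall_ne_u (by simp [List.mem_replicate]), List.length_replicate]

theorem staysNonnegFrom_zero_iff :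
    StaysNonnegFrom 0 L ↔ ∀ i, downCount (L.take i) ≤ upCount (L.take i) := by
  simp only [StaysNonnegFrom, bheight, zero_add, sub_nonneg, Nat.cast_le]

theorem StaysNonnegFrom.append {c : ℤ} (h₁ : StaysNonnegFrom c L₁)
    (h₂ : StaysNonnegFrom (c + bheight L₁) L₂) : StaysNonnegFrom c (L₁ ++ L₂) := by
  intro i
  rw [List.take_append, bheight_append]
  rcases le_or_gt i L₁.length with hi | hi
  · simpa [Nat.sub_eq_zero_of_le hi] using h₁ i
  · rw [List.take_of_length_le hi.le, ← add_assoc]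
    exact h₂ _

theorem staysNonnegFrom_u_cons {c : ℤ} (hL : ∀ x ∈ L, x ≠ BStep.u) (hc : 0 ≤ c)
    (hend : 0 ≤ c + bheight (BStep.u :: L)) : StaysNonnegFrom c (BStep.u :: L) := by
  rintro (_ | i)
  · simpa using hc
  · have hi : ∀ x ∈ L.take i, x ≠ BStep.u := fun x hx => hL x (List.mem_of_mem_take hx)
    have hlen : (L.take i).length ≤ L.length := List.length_take_le' _ _
    rw [bheight_u_cons, bheight_of_forall_ne_u hL] at hend
    rw [List.take_succ_cons, bheight_u_cons, bheight_of_forall_ne_u hi]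
    omega

end Height

def fblock (s : ℤ × ℤ) : List BStep :=
  BStep.u :: (List.replicate (1 - s.2).toNat BStep.dR ++ List.replicate s.1.toNat BStep.dB)

def fword (Q : List (ℤ × ℤ)) : List BStep := (Q.map fblock).flatten

def encodeWith (Q : List (ℤ × ℤ)) (j : ℕ) : List BStep :=
  fword Q ++ BStep.u :: List.replicate j BStep.dR

def encode (Q : List (ℤ × ℤ)) : List BStep := encodeWith Q ((fheight Q).toNat + 1)

section Encoding

variable {s : ℤ × ℤ} {Q : List (ℤ × ℤ)}

@[simp] theorem fword_nil : fword [] = [] := rfl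

@[simp] theorem fword_cons : fword (s :: Q) = fblock s ++ fword Q := rfl

theorem fword_append (Q R : List (ℤ × ℤ)) : fword (Q ++ R) = fword Q ++ fword R := by
  simp [fword]

theorem fblock_ne_u : ∀ x ∈ List.replicate (1 - s.2).toNat BStep.dR ++
    List.replicate s.1.toNat BStep.dB, x ≠ BStep.u := by
  intro x hx
  rcases List.mem_append.1 hx with h | h <;> simp [List.eq_of_mem_replicate h]

@[simp] theorem upCount_fblock : upCount (fblock s) = 1 := by
  simp [fblock, upCount, List.countP_replicate]

theorem bheight_fblock (hs : IsFStep s) : bheight (fblock s) = s.2 - s.1 := by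
  rw [fblock, bheight_u_cons, bheight_of_forall_ne_u fblock_ne_u]
  have := hs.fst_nonneg; have := hs.snd_le_one
  simp only [List.length_append, List.length_replicate]
  omega

theorem staysNonnegFrom_fblock {c : ℤ} (hs : IsFStep s) (hc : 0 ≤ c)
    (hend : 0 ≤ c + (s.2 - s.1)) : StaysNonnegFrom c (fblock s) :=
  staysNonnegFrom_u_cons fblock_ne_u hc (by rwa [← fblock, bheight_fblock hs])

@[simp] theorem upCount_fword : upCount (fword Q) = Q.length := by
  induction Q with
  | nil => rfl
  | cons s Q ih => simp [ih, add_comm]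

theorem bheight_fword (hF : ∀ s ∈ Q, IsFStep s) : bheight (fword Q) = fheight Q := by
  induction Q with
  | nil => rfl
  | cons s Q ih =>
    rw [fword_cons, bheight_append, bheight_fblock (hF s (by simp)),
      ih (fun t ht => hF t (by simp [ht])), fheight_cons]

theorem staysNonnegFrom_fword {c : ℤ} (hF : ∀ s ∈ Q, IsFStep s)
    (hQ : ∀ i, 0 ≤ c + fheight (Q.take i)) : StaysNonnegFrom c (fword Q) := by
  induction Q generalizing c with
  | nil => simpa [StaysNonnegFrom] using hQ 0
  | cons s Q ih =>
    have hs := hF s (by simp)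
    have h₀ : 0 ≤ c := by simpa using hQ 0
    have h₁ : 0 ≤ c + (s.2 - s.1) := by simpa [fheight_cons] using hQ 1
    refine (staysNonnegFrom_fblock hs h₀ h₁).append
      (ih (fun t ht => hF t (by simp [ht])) fun i => ?_)
    have := hQ (i + 1)
    rw [List.take_succ_cons, fheight_cons] at this
    rw [bheight_fblock hs]
    linarith

theorem upCount_encodeWith (j : ℕ) : upCount (encodeWith Q j) = Q.length + 1 := by
  rw [encodeWith, upCount_append, upCount_fword]
  simp [upCount, List.countP_replicate]

theorem bheight_encodeWith (hF : ∀ s ∈ Q, IsFStep s) (j : ℕ) :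
    bheight (encodeWith Q j) = fheight Q + 1 - j := by
  rw [encodeWith, bheight_append, bheight_fword hF, bheight_u_cons, bheight_replicate_dR]
  ring

theorem staysNonnegFrom_encode (hQ : IsFPath Q) : StaysNonnegFrom 0 (encode Q) := by
  have hh := hQ.fheight_nonneg
  refine (staysNonnegFrom_fword hQ.1 (by simpa using (isFPath_iff.1 hQ).2)).append
    (staysNonnegFrom_u_cons (by simp) ?_ ?_)
  · simpa [bheight_fword hQ.1] using hh
  · rw [bheight_u_cons, bheight_replicate_dR, bheight_fword hQ.1]
    omega

theorem encodeWith_head? (j : ℕ) : (encodeWith Q j).head? = some BStep.u := by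
  cases Q <;> simp [encodeWith, fblock]

theorem fblock_append_inj {s' : ℤ × ℤ} {L L' : List BStep} (hs : IsFStep s) (hs' : IsFStep s')
    (hL : L.head? = some BStep.u) (hL' : L'.head? = some BStep.u)
    (h : fblock s ++ L = fblock s' ++ L') : s = s' ∧ L = L' := by
  have ne_dR : ∀ (k : ℕ) (L : List BStep), L.head? = some BStep.u →
      (List.replicate k BStep.dB ++ L).head? ≠ some BStep.dR := by
    rintro (_ | k) L hL <;> simp [hL, List.replicate_succ]
  simp only [fblock, List.cons_append, List.cons.injEq, true_and, List.append_assoc] at h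
  obtain ⟨hb, h⟩ := List.replicate_append_inj_of_head?_ne (ne_dR _ _ hL) (ne_dR _ _ hL') h
  obtain ⟨ha, rfl⟩ := List.replicate_append_inj_of_head?_ne (by simp [hL]) (by simp [hL']) h
  exact ⟨hs.eq_of_toNat_eq hs' hb ha, rfl⟩

theorem encodeWith_inj {Q' : List (ℤ × ℤ)} {j j' : ℕ} (hlen : Q.length = Q'.length)
    (hF : ∀ s ∈ Q, IsFStep s) (hF' : ∀ s ∈ Q', IsFStep s)
    (h : encodeWith Q j = encodeWith Q' j') : Q = Q' ∧ j = j' := by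
  induction Q generalizing Q' with
  | nil =>
    obtain rfl : Q' = [] := List.length_eq_zero_iff.1 hlen.symm
    simpa [encodeWith] using h
  | cons s Q ih =>
    obtain ⟨s', Q', rfl⟩ := List.exists_cons_of_length_eq_add_one hlen.symm
    have h' : fblock s ++ encodeWith Q j = fblock s' ++ encodeWith Q' j' := by
      simpa [encodeWith] using h
    obtain ⟨rfl, h''⟩ := fblock_append_inj (hF s (by simp)) (hF' s' (by simp))
      (encodeWith_head? _) (encodeWith_head? _) h'
    obtain ⟨rfl, rfl⟩ := ih (by simpa using hlen) (fun t ht => hF t (by simp [ht]))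
      (fun t ht => hF' t (by simp [ht])) h''
    exact ⟨rfl, rfl⟩

end Encoding

def rblock (t : ℕ × ℕ × ℕ) : List BStep :=
  List.replicate t.1 BStep.u ++ List.replicate t.2.1 BStep.dR ++ List.replicate t.2.2 BStep.dB

def rblockSteps (t : ℕ × ℕ × ℕ) : List (ℤ × ℤ) :=
  List.replicate (t.1 - 1) (0, 1) ++ [((t.2.2 : ℤ), 1 - (t.2.1 : ℤ))]

def rbdWord (bs : List (ℕ × ℕ × ℕ)) (i j : ℕ) : List BStep :=
  (bs.map rblock).flatten ++ (List.replicate i BStep.u ++ List.replicate j BStep.dR)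

section Factorisation

variable {bs : List (ℕ × ℕ × ℕ)} {Q : List (ℤ × ℤ)}

theorem upCount_rbdWord (i j : ℕ) : upCount (rbdWord bs i j) = (bs.map fun t => t.1).sum + i := by
  have hblocks : upCount (bs.map rblock).flatten = (bs.map fun t => t.1).sum := by
    induction bs with
    | nil => rfl
    | cons t bs ih =>
      rw [List.map_cons, List.flatten_cons, upCount_append, ih, List.map_cons, List.sum_cons]
      simp [rblock, upCount, List.countP_replicate]
  rw [rbdWord, upCount_append, upCount_append, hblocks]
  simp [upCount, List.countP_replicate]

theorem downCount_rbdWord (i j : ℕ) :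
    downCount (rbdWord bs i j) = (bs.map fun t => t.2.1).sum + j + (bs.map fun t => t.2.2).sum := by
  have hblocks : downCount (bs.map rblock).flatten =
      (bs.map fun t => t.2.1).sum + (bs.map fun t => t.2.2).sum := by
    induction bs with
    | nil => rfl
    | cons t bs ih =>
      rw [List.map_cons, List.flatten_cons, downCount_append, ih]
      simp [rblock, downCount, List.countP_replicate]
      ring
  rw [rbdWord, downCount_append, downCount_append, hblocks]
  simp [downCount, List.countP_replicate]
  ring

theorem fword_replicate_north (c : ℕ) :
    fword (List.replicate c (0, 1)) = List.replicate c BStep.u := by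
  induction c with
  | zero => rfl
  | succ c ih => simp [List.replicate_succ, ih, fblock]

theorem fword_rblockSteps {t : ℕ × ℕ × ℕ} (ht : 1 ≤ t.1) : fword (rblockSteps t) = rblock t := by
  obtain ⟨i, j, k⟩ := t
  obtain ⟨i, rfl⟩ := Nat.exists_eq_add_of_le' ht
  simp [rblockSteps, rblock, fword_append, fword_replicate_north, fblock, List.replicate_succ']

theorem fword_flatMap_rblockSteps (hbs : ∀ t ∈ bs, 1 ≤ t.1) :
    fword (bs.flatMap rblockSteps) = (bs.map rblock).flatten := by
  induction bs with
  | nil => rfl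
  | cons t bs ih =>
    rw [List.flatMap_cons, fword_append, fword_rblockSteps (hbs t (by simp)),
      ih (fun t ht => hbs t (by simp [ht]))]
    rfl

theorem isFStep_of_mem_flatMap_rblockSteps (hbs : ∀ t ∈ bs, 1 ≤ t.2.2) :
    ∀ s ∈ bs.flatMap rblockSteps, IsFStep s := by
  intro s hs
  obtain ⟨t, ht, hs⟩ := List.mem_flatMap.1 hs
  rcases List.mem_append.1 hs with h | h
  · exact Or.inl (List.eq_of_mem_replicate h)
  · rw [List.mem_singleton.1 h]
    exact Or.inr ⟨by simpa using hbs t ht, by simp⟩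

theorem exists_rblocks_fword (hF : ∀ s ∈ Q, IsFStep s) :
    ∃ (bs : List (ℕ × ℕ × ℕ)) (i : ℕ), (∀ t ∈ bs, 1 ≤ t.1 ∧ 1 ≤ t.2.2) ∧ 1 ≤ i ∧
      fword Q ++ [BStep.u] = (bs.map rblock).flatten ++ List.replicate i BStep.u := by
  induction Q with
  | nil => exact ⟨[], 1, by simp, le_rfl, rfl⟩
  | cons s Q ih =>
    obtain ⟨bs, i, hbs, hi, hQ⟩ := ih fun t ht => hF t (by simp [ht])
    rcases hF s (by simp) with rfl | ⟨ha, hb⟩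
    · have hu : fblock (0, 1) = [BStep.u] := rfl
      rcases bs with _ | ⟨t, bs⟩
      · refine ⟨[], i + 1, by simp, by omega, ?_⟩
        simp [hu, hQ, List.replicate_succ]
      · refine ⟨(t.1 + 1, t.2) :: bs, i, ?_, hi, ?_⟩
        · simp only [List.mem_cons, forall_eq_or_imp] at hbs ⊢
          exact ⟨⟨by omega, hbs.1.2⟩, hbs.2⟩
        · simp [hu, hQ, rblock, List.replicate_succ]
    · refine ⟨(1, (1 - s.2).toNat, s.1.toNat) :: bs, i, ?_, hi, ?_⟩
      · simp only [List.mem_cons, forall_eq_or_imp]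
        exact ⟨⟨le_rfl, by omega⟩, hbs⟩
      · simp [hQ, rblock, fblock]

end Factorisation

theorem isRBD_encode {n : ℕ} {Q : List (ℤ × ℤ)} (hQ : Q ∈ FPaths n) : IsRBD (n + 1) (encode Q) := by
  obtain ⟨rfl, hpath⟩ := hQ
  obtain ⟨bs, i, hbs, hi, hword⟩ := exists_rblocks_fword hpath.1
  set j := (fheight Q).toNat + 1
  have hB : encode Q = rbdWord bs i j := by
    rw [rbdWord, ← List.append_assoc, ← hword, encode, encodeWith, List.append_assoc]
    rfl
  have hup := upCount_encodeWith (Q := Q) j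
  have hheight : bheight (encode Q) = 0 := by
    have := hpath.fheight_nonneg
    rw [encode, bheight_encodeWith hpath.1]
    omega
  rw [← encode, hB, upCount_rbdWord] at hup
  rw [hB, bheight, upCount_rbdWord, downCount_rbdWord] at hheight
  exact ⟨⟨bs, i, j, hbs, hi, hB, by omega, by omega⟩,
    staysNonnegFrom_zero_iff.1 (staysNonnegFrom_encode hpath)⟩

theorem fword_take_prefix_encodeWith (Q : List (ℤ × ℤ)) (i j : ℕ) :
    fword (Q.take i) <+: encodeWith Q j := by
  have hQ : fword Q = fword (Q.take i) ++ fword (Q.drop i) := by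
    rw [← fword_append, List.take_append_drop]
  rw [encodeWith, hQ, List.append_assoc]
  exact List.prefix_append _ _

theorem exists_encode_eq {n : ℕ} {B : List BStep} (hB : IsRBD (n + 1) B) :
    ∃ Q ∈ FPaths n, encode Q = B := by
  obtain ⟨⟨bs, i, j, hbs, hi, rfl, hup, hdown⟩, hpre⟩ := hB
  set Q := bs.flatMap rblockSteps ++ List.replicate (i - 1) (0, 1)
  have hF : ∀ s ∈ Q, IsFStep s := by
    simp only [Q, List.forall_mem_append]
    exact ⟨isFStep_of_mem_flatMap_rblockSteps (fun t ht => (hbs t ht).2),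
      fun s hs => Or.inl (List.eq_of_mem_replicate hs)⟩
  have hQ : encodeWith Q j = rbdWord bs i j := by
    obtain ⟨i, rfl⟩ := Nat.exists_eq_add_of_le' hi
    simp [Q, encodeWith, rbdWord, fword_append, fword_flatMap_rblockSteps (fun t ht => (hbs t ht).1),
      fword_replicate_north, List.replicate_succ']
  have hlen : Q.length = n := by
    have := upCount_encodeWith (Q := Q) j
    rw [hQ, upCount_rbdWord] at this
    omega
  have hheight : fheight Q + 1 - j = 0 := by
    rw [← bheight_encodeWith hF, hQ, bheight, upCount_rbdWord, downCount_rbdWord]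
    omega
  have hnonneg : StaysNonnegFrom 0 (encodeWith Q j) := by
    rw [hQ]
    exact staysNonnegFrom_zero_iff.2 hpre
  have hpath : ∀ k, 0 ≤ fheight (Q.take k) := by
    intro k
    have := hnonneg (fword (Q.take k)).length
    rwa [← List.prefix_iff_eq_take.1 (fword_take_prefix_encodeWith Q k j), zero_add,
      bheight_fword fun s hs => hF s (List.mem_of_mem_take hs)] at this
  have hh : 0 ≤ fheight Q := by simpa using hpath Q.length
  exact ⟨Q, ⟨hlen, isFPath_iff.2 ⟨hF, hpath⟩⟩, (congrArg (encodeWith Q) (by omega)).trans hQ⟩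

theorem encode_injOn (n : ℕ) : Set.InjOn encode (FPaths n) :=
  fun _ h₁ _ h₂ h => (encodeWith_inj (h₁.1.trans h₂.1.symm) h₁.2.1 h₂.2.1 h).1

theorem image_encode_fPaths (n : ℕ) : encode '' FPaths n = {B | IsRBD (n + 1) B} := by
  ext B
  constructor
  · rintro ⟨Q, hQ, rfl⟩
    exact isRBD_encode hQ
  · exact exists_encode_eq

def tailPattern (a b : ℤ) (m : ℕ) : List BStep :=
  [BStep.u] ++ List.replicate (1 - b).toNat BStep.dR ++ List.replicate a.toNat BStep.dB ++
    [BStep.u] ++ List.replicate (m + 1) BStep.dR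

/-- Read backwards, both words start with `dR^{m+1} u dB^a dR^{1-b} u`, and the run lengths can
be matched one at a time. -/
theorem tailPattern_suffix_encode_iff {Q : List (ℤ × ℤ)} {a b : ℤ}
    (hF : ∀ s ∈ Q, IsFStep s) (hab : IsFStep (a, b)) :
    (∃ m, tailPattern a b m <:+ encode Q) ↔ Q.getLast? = some (a, b) := by
  constructor
  · rintro ⟨m, hm⟩
    rcases List.eq_nil_or_concat Q with rfl | ⟨Q, s, rfl⟩
    · have := hm.length_le
      simp [tailPattern, encode, encodeWith] at this
      omega
    rw [List.concat_eq_append] at hF hm ⊢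
    have hrev := List.reverse_prefix.2 hm
    simp only [tailPattern, encode, encodeWith, fword_append, fword_cons, fword_nil, fblock,
      List.append_nil, List.reverse_append, List.reverse_cons, List.reverse_replicate,
      List.nil_append, List.append_assoc, List.cons_append] at hrev
    obtain ⟨-, hrev⟩ := List.replicate_append_prefix_of_head?_ne (by simp) (by simp) (by simp) hrev
    rw [List.cons_prefix_cons] at hrev
    obtain ⟨ha, hrev⟩ := List.replicate_append_prefix_of_head?_ne (by simp)
      (by rcases (1 - b).toNat with _ | _ <;> simp [List.replicate_succ])
      (by rcases (1 - s.2).toNat with _ | _ <;> simp [List.replicate_succ]) hrev.2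
    obtain ⟨hb, -⟩ := List.replicate_append_prefix_of_head?_ne (by simp) (by simp) (by simp) hrev
    rw [List.getLast?_append_of_ne_nil _ (by simp), List.getLast?_singleton,
      hab.eq_of_toNat_eq (hF s (by simp)) hb ha]
  · intro hlast
    obtain ⟨Q, rfl⟩ := List.getLast?_eq_some_iff.1 hlast
    refine ⟨(fheight (Q ++ [(a, b)])).toNat, fword Q, ?_⟩
    simp [tailPattern, encode, encodeWith, fword_append, fblock]

/-- Theorem 2.6: restricted bicolored Dyck paths of semilength `n+1` ending with
`u dR^{1-b} dB^a u dR^{m+1}` are equinumerous with `F`-paths of length `n` with last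
step `(a,b)`; consequently `|B_{n+1}| = |F_n|`. -/
theorem rbd_Fpath_counts (n : ℕ) (a b : ℤ) (hab : IsFStep (a, b)) :
    ({B : List BStep | IsRBD (n + 1) B ∧ ∃ m : ℕ,
        ([BStep.u] ++ List.replicate (1 - b).toNat BStep.dR ++
          List.replicate a.toNat BStep.dB ++ [BStep.u] ++
          List.replicate (m + 1) BStep.dR) <:+ B}).ncard =
      ({Q ∈ FPaths n | Q.getLast? = some (a, b)}).ncard ∧
    ({B : List BStep | IsRBD (n + 1) B}).ncard = (FPaths n).ncard := by
  have himage_last : encode '' {Q ∈ FPaths n | Q.getLast? = some (a, b)} =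
      {B | IsRBD (n + 1) B ∧ ∃ m, tailPattern a b m <:+ B} := by
    ext B
    constructor
    · rintro ⟨Q, ⟨hQ, hlast⟩, rfl⟩
      exact ⟨isRBD_encode hQ, (tailPattern_suffix_encode_iff hQ.2.1 hab).2 hlast⟩
    · rintro ⟨hB, hm⟩
      obtain ⟨Q, hQ, rfl⟩ := exists_encode_eq hB
      exact ⟨Q, ⟨hQ, (tailPattern_suffix_encode_iff hQ.2.1 hab).1 hm⟩, rfl⟩
  constructor
  · rw [← ((encode_injOn n).mono (Set.sep_subset _ _)).ncard_image, himage_last]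
    rfl
  · rw [← image_encode_fPaths, (encode_injOn n).ncard_image]
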